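/- arXiv:2105.01712 — 2 statements merged into one kernel-verified Lean document; each statement's English description precedes it below -/
import Mathlib

section
/- Let Z be a point distribution in ℂ of finite upper density, i.e. limsup_{r→∞} n_Z(r)/r < +∞ where n_Z(r) is the number of points z_j with |z_j| ≤ r (counted with multiplicity). Then there exists a point distribution X ⊂ ℝ of finite upper density such that the union Z ∪ X satisfies the ℝ-Lindelöf condition: sup_{r≥1} |∑_{1<|w|≤r, w ∈ Z∪X} Re(1/w)| < +∞. -/
open Complex Filter

/-- Sum of `f (1/z_j)` over points of the distribution `z` with `r < |z_j| ≤ R`. -/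
noncomputable def annSum {ι : Type*} (z : ι → ℂ) (f : ℂ → ℝ) (r R : ℝ) : ℝ :=
  ∑' j, if r < ‖z j‖ ∧ ‖z j‖ ≤ R then f ((z j)⁻¹) else 0

/-- Complex-valued sum of `1/z_j` over `1 < |z_j| ≤ r`. -/
noncomputable def cSum {ι : Type*} (z : ι → ℂ) (r : ℝ) : ℂ :=
  ∑' j, if 1 < ‖z j‖ ∧ ‖z j‖ ≤ r then (z j)⁻¹ else 0

/-- Local finiteness of a point distribution. -/
def LocFin {ι : Type*} (z : ι → ℂ) : Prop :=
  ∀ r : ℝ, {j | ‖z j‖ ≤ r}.Finite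

/-- Radial counting function (as a real number). -/
noncomputable def nrad {ι : Type*} (z : ι → ℂ) (r : ℝ) : ℝ :=
  ∑' j, if ‖z j‖ ≤ r then (1 : ℝ) else 0

/-- Finite upper density: `limsup_{r→∞} n(r)/r < +∞`. -/
def FinUpperDensity {ι : Type*} (z : ι → ℂ) : Prop :=
  IsBoundedUnder (· ≤ ·) atTop (fun r : ℝ => nrad z r / r)

/-- Right logarithmic interval measure. -/
noncomputable def lrh {ι : Type*} (z : ι → ℂ) (r R : ℝ) : ℝ :=
  annSum z (fun w => max w.re 0) r R

/-- Left logarithmic interval measure. -/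
noncomputable def llh {ι : Type*} (z : ι → ℂ) (r R : ℝ) : ℝ :=
  annSum z (fun w => max (-w.re) 0) r R

/-- Logarithmic submeasure. -/
noncomputable def lsub {ι : Type*} (z : ι → ℂ) (r R : ℝ) : ℝ :=
  max (llh z r R) (lrh z r R)

/-- Lindelöf condition of genus 1. -/
def LindCond {ι : Type*} (z : ι → ℂ) : Prop :=
  ∃ C : ℝ, ∀ r : ℝ, 1 ≤ r → ‖cSum z r‖ ≤ C

/-- ℝ-Lindelöf condition. -/
def RLindCond {ι : Type*} (z : ι → ℂ) : Prop :=
  ∃ C : ℝ, ∀ r : ℝ, 1 ≤ r → |annSum z (fun w => w.re) 1 r| ≤ C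

/-- iℝ-Lindelöf condition. -/
def ILindCond {ι : Type*} (z : ι → ℂ) : Prop :=
  ∃ C : ℝ, ∀ r : ℝ, 1 ≤ r → |annSum z (fun w => w.im) 1 r| ≤ C

section AuxLemmas

lemma nrad_eq_card' {zz : ℕ → ℂ} {r : ℝ} (h : {j | ‖zz j‖ ≤ r}.Finite) :
    nrad zz r = h.toFinset.card := by
  rw [nrad, tsum_eq_sum (s := h.toFinset) (fun j hj => by
    rw [if_neg]; simpa using hj)]
  rw [Finset.sum_ite_of_true, Finset.sum_const, nsmul_eq_mul, mul_one]
  intro j hj; simpa using hj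

end AuxLemmas

theorem exists_real_distribution_rlindelof_union (z : ℕ → ℂ) (hfin : LocFin z)
    (hdens : FinUpperDensity z) :
    ∃ x : ℕ → ℝ,
      LocFin (fun j => (x j : ℂ)) ∧
      FinUpperDensity (fun j => (x j : ℂ)) ∧
      RLindCond (Sum.elim z (fun j => (x j : ℂ))) := by
  classical
  set w : ℕ → ℝ := fun j => ((z j)⁻¹).re with hwdef
  set x : ℕ → ℝ := fun j => if w j = 0 then 2 ^ (j + 2) else -(w j)⁻¹ with hxdef
  have habs : ∀ j, ‖(x j : ℂ)‖ = |x j| := fun j => by rw [Complex.norm_real, Real.norm_eq_abs]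
  have hwz : ∀ j, w j ≠ 0 → z j ≠ 0 := by
    intro j h hz; exact h (by simp [hwdef, hz])
  have hw_le : ∀ j, w j ≠ 0 → ‖z j‖ ≤ |w j|⁻¹ := by
    intro j h
    have hz := hwz j h
    have hz0 : 0 < ‖z j‖ := by
      simpa [AbsoluteValue.pos_iff] using hz
    have h1 : |w j| ≤ (‖z j‖)⁻¹ := by
      calc |w j| ≤ ‖(z j)⁻¹‖ := Complex.abs_re_le_norm _
        _ = (‖z j‖)⁻¹ := norm_inv _
    exact (le_inv_comm₀ hz0 (abs_pos.mpr h)).mpr h1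
  have hxabs_pos : ∀ j, w j = 0 → x j = 2 ^ (j + 2) := fun j h => by
    simp [hxdef, h]
  have hxabs_neg : ∀ j, w j ≠ 0 → x j = -(w j)⁻¹ := fun j h => by
    simp [hxdef, h]
  have hxloc : ∀ r : ℝ, ∀ j, ‖(x j : ℂ)‖ ≤ r →
      ‖z j‖ ≤ r ∨ (j : ℝ) ≤ r := by
    intro r j hj
    rw [habs] at hj
    by_cases h : w j = 0
    · right
      have h2r : (2 : ℝ) ^ (j + 2) ≤ r := by
        refine le_trans ?_ hj
        rw [hxabs_pos j h]
        exact le_abs_self _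
      refine le_trans ?_ h2r
      calc (j : ℝ) ≤ ((2 ^ j : ℕ) : ℝ) := by exact_mod_cast (Nat.lt_two_pow_self (n := j)).le
        _ = (2 : ℝ) ^ j := by push_cast; ring
        _ ≤ (2 : ℝ) ^ (j + 2) := by
            apply pow_le_pow_right₀ one_le_two; omega
    · left
      refine le_trans (hw_le j h) (le_trans ?_ hj)
      rw [hxabs_neg j h, abs_neg, abs_inv]
  have hNfin : ∀ r : ℝ, {j : ℕ | (j : ℝ) ≤ r}.Finite := by
    intro r
    apply (Set.finite_Iic (⌈r⌉₊)).subset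
    intro j hj
    simp only [Set.mem_setOf_eq] at hj
    simp only [Set.mem_Iic]
    exact_mod_cast hj.trans (Nat.le_ceil r)
  have hx : LocFin (fun j => (x j : ℂ)) := by
    intro r
    refine ((hfin r).union (hNfin r)).subset ?_
    intro j hj
    exact hxloc r j hj
  have hnrad_nonneg : ∀ r : ℝ, 0 ≤ nrad z r := by
    intro r; rw [nrad_eq_card' (hfin r)]; positivity
  have hnrad_mono : ∀ {s t : ℝ}, s ≤ t → nrad z s ≤ nrad z t := by
    intro s t hst
    rw [nrad_eq_card' (hfin s), nrad_eq_card' (hfin t)]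
    have hsub : (hfin s).toFinset ⊆ (hfin t).toFinset := by
      intro j hj
      simp only [Set.Finite.mem_toFinset, Set.mem_setOf_eq] at hj ⊢
      exact hj.trans hst
    exact_mod_cast Finset.card_le_card hsub
  obtain ⟨b, hb⟩ := hdens
  rw [Filter.eventually_map] at hb
  have hxdens : FinUpperDensity (fun j => (x j : ℂ)) := by
    refine ⟨b + 3, ?_⟩
    rw [Filter.eventually_map]
    filter_upwards [hb, Filter.eventually_ge_atTop (2 : ℝ)] with r hbr h2r
    have hr0 : (0 : ℝ) < r := by linarith
    have hcard : nrad (fun j => (x j : ℂ)) r ≤ nrad z r + (r + 2) := by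
      rw [nrad_eq_card' (hx r), nrad_eq_card' (hfin r)]
      have hsub : (hx r).toFinset ⊆ (hfin r).toFinset ∪ (hNfin r).toFinset := by
        intro j hj
        simp only [Set.Finite.mem_toFinset, Set.mem_setOf_eq, Finset.mem_union] at hj ⊢
        exact hxloc r j hj
      have h1 : (hx r).toFinset.card ≤ (hfin r).toFinset.card + (hNfin r).toFinset.card :=
        le_trans (Finset.card_le_card hsub) (Finset.card_union_le _ _)
      have h2 : (hNfin r).toFinset.card ≤ ⌈r⌉₊ + 1 := by
        have hsub2 : (hNfin r).toFinset ⊆ Finset.Iic ⌈r⌉₊ := by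
          intro j hj
          simp only [Set.Finite.mem_toFinset, Set.mem_setOf_eq] at hj
          simp only [Finset.mem_Iic]
          exact_mod_cast hj.trans (Nat.le_ceil r)
        simpa [Nat.card_Iic] using Finset.card_le_card hsub2
      have h3 : ((⌈r⌉₊ : ℝ)) ≤ r + 1 := (Nat.ceil_lt_add_one (by linarith)).le
      have h5 : (hx r).toFinset.card ≤ (hfin r).toFinset.card + (⌈r⌉₊ + 1) :=
        le_trans h1 (Nat.add_le_add_left h2 _)
      have h6 : ((hx r).toFinset.card : ℝ) ≤
          ((hfin r).toFinset.card : ℝ) + ((⌈r⌉₊ : ℝ) + 1) := by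
        exact_mod_cast h5
      linarith
    have hdiv : nrad (fun j => (x j : ℂ)) r / r ≤ (nrad z r + (r + 2)) / r := by
      apply div_le_div_of_nonneg_right hcard hr0.le
    refine hdiv.trans ?_
    rw [add_div]
    have h5 : (r + 2) / r ≤ 2 := by
      rw [div_le_iff₀ hr0]; linarith
    linarith
  refine ⟨x, hx, hxdens, ?_⟩
  rw [Filter.eventually_atTop] at hb
  obtain ⟨r0, hr0⟩ := hb
  set r1 : ℝ := max r0 1 with hr1def
  have hM : ∀ r : ℝ, 1 ≤ r → nrad z r / r ≤ max b (nrad z r1) := by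
    intro r hr
    rcases le_total r1 r with h | h
    · exact le_trans (hr0 r ((le_max_left _ _).trans h)) (le_max_left _ _)
    · refine le_trans (div_le_self (hnrad_nonneg r) hr) ?_
      exact le_trans (hnrad_mono h) (le_max_right _ _)
  refine ⟨max b (nrad z r1) + nrad z 1 + 2⁻¹, ?_⟩
  intro r hr
  have hrpos : (0 : ℝ) < r := by linarith
  set F : Finset ℕ := (hfin r).toFinset ∪ (hx r).toFinset with hFdef
  have step1 : annSum (Sum.elim z (fun j => (x j : ℂ))) (fun w => w.re) 1 r =
      ∑ j ∈ F, ((if 1 < ‖z j‖ ∧ ‖z j‖ ≤ r then w j else 0) +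
        (if 1 < ‖(x j : ℂ)‖ ∧ ‖(x j : ℂ)‖ ≤ r then (x j)⁻¹ else 0)) := by
    rw [annSum, tsum_eq_sum (s := F.disjSum F) ?side]
    · rw [Finset.sum_disjSum, ← Finset.sum_add_distrib]
      refine Finset.sum_congr rfl fun j _ => ?_
      simp [hwdef, ← Complex.ofReal_inv]
    case side =>
      intro p hp
      rcases p with j | j
      · rw [Finset.inl_mem_disjSum] at hp
        rw [if_neg]
        rintro ⟨-, h2⟩
        refine hp (Finset.mem_union_left _ ?_)
        simpa using h2
      · rw [Finset.inr_mem_disjSum] at hp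
        rw [if_neg]
        rintro ⟨-, h2⟩
        refine hp (Finset.mem_union_right _ ?_)
        simpa using h2
  have hpoint : ∀ j, |(if 1 < ‖z j‖ ∧ ‖z j‖ ≤ r then w j else 0) +
      (if 1 < ‖(x j : ℂ)‖ ∧ ‖(x j : ℂ)‖ ≤ r then (x j)⁻¹ else 0)| ≤
      (if ‖z j‖ ≤ r then r⁻¹ else 0) +
      ((if ‖z j‖ ≤ 1 then 1 else 0) + ((1 : ℝ) / 2) ^ (j + 2)) := by
    intro j
    have ht1 : (0:ℝ) ≤ (if ‖z j‖ ≤ r then r⁻¹ else 0) := by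
      split
      · positivity
      · exact le_refl 0
    have ht2 : (0:ℝ) ≤ (if ‖z j‖ ≤ 1 then (1:ℝ) else 0) := by
      split <;> norm_num
    have ht3 : (0:ℝ) ≤ ((1:ℝ)/2) ^ (j+2) := by positivity
    by_cases h : w j = 0
    · have hx2 : x j = 2 ^ (j + 2) := hxabs_pos j h
      have ha0 : (if 1 < ‖z j‖ ∧ ‖z j‖ ≤ r then w j else 0) = 0 := by
        split <;> simp [h]
      have hb0 : |(if 1 < ‖(x j : ℂ)‖ ∧ ‖(x j : ℂ)‖ ≤ r
          then (x j)⁻¹ else 0)| ≤ ((1:ℝ)/2) ^ (j+2) := by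
        split
        · rw [hx2, abs_inv, abs_of_pos (by positivity : (0:ℝ) < 2 ^ (j+2))]
          apply le_of_eq
          rw [one_div, inv_pow]
        · simpa using ht3
      rw [ha0, zero_add]
      linarith [hb0]
    · have hx2 : x j = -(w j)⁻¹ := hxabs_neg j h
      have hwpos : 0 < |w j| := abs_pos.mpr h
      have habsx : ‖(x j : ℂ)‖ = |w j|⁻¹ := by
        rw [habs, hx2, abs_neg, abs_inv]
      have hinvx : (x j)⁻¹ = -w j := by rw [hx2, inv_neg, inv_inv]
      rw [habsx, hinvx]
      by_cases hA : 1 < ‖z j‖ ∧ ‖z j‖ ≤ r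
      · by_cases hB : 1 < |w j|⁻¹ ∧ |w j|⁻¹ ≤ r
        · rw [if_pos hA, if_pos hB]
          have hzero : w j + -w j = 0 := by ring
          rw [hzero, abs_zero]
          exact add_nonneg ht1 (add_nonneg ht2 ht3)
        · rw [if_pos hA, if_neg hB, add_zero, if_pos hA.2]
          have h1 : 1 < |w j|⁻¹ := lt_of_lt_of_le hA.1 (hw_le j h)
          have h2 : ¬ (|w j|⁻¹ ≤ r) := fun hc => hB ⟨h1, hc⟩
          push_neg at h2
          have h3 : |w j| < r⁻¹ := (lt_inv_comm₀ hrpos hwpos).mp h2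
          linarith [ht2, ht3]
      · by_cases hB : 1 < |w j|⁻¹ ∧ |w j|⁻¹ ≤ r
        · rw [if_neg hA, if_pos hB, zero_add, abs_neg]
          have hz_r : ‖z j‖ ≤ r := (hw_le j h).trans hB.2
          have hz1 : ‖z j‖ ≤ 1 := by
            by_contra hc
            push_neg at hc
            exact hA ⟨hc, hz_r⟩
          rw [if_pos hz1]
          have h4 : |w j| < 1 := (one_lt_inv₀ hwpos).mp hB.1
          linarith [ht1, ht3]
        · rw [if_neg hA, if_neg hB]
          rw [add_zero, abs_zero]
          exact add_nonneg ht1 (add_nonneg ht2 ht3)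
  have hsum_gen : ∀ (c ρ : ℝ), 0 ≤ c →
      ∑ j ∈ F, (if ‖z j‖ ≤ ρ then c else 0) ≤ c * nrad z ρ := by
    intro c ρ hc
    have hsummable : Summable (fun j : ℕ => if ‖z j‖ ≤ ρ then c else 0) :=
      summable_of_ne_finset_zero (s := (hfin ρ).toFinset)
        (fun j hj => if_neg (by simpa using hj))
    refine le_trans (Summable.sum_le_tsum F (fun j _ => by
      split
      · exact hc
      · exact le_refl 0) hsummable) ?_
    rw [nrad, ← tsum_mul_left]
    refine le_of_eq (tsum_congr fun j => ?_)
    split <;> simp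
  have hgeo : Summable (fun j : ℕ => ((1:ℝ)/2) ^ (j + 2)) := by
    have hs := (summable_geometric_of_lt_one (by norm_num : (0:ℝ) ≤ 1/2)
      (by norm_num : (1:ℝ)/2 < 1)).mul_right (((1:ℝ)/2) ^ 2)
    simpa [pow_add] using hs
  have hsum3 : ∑ j ∈ F, ((1:ℝ)/2) ^ (j + 2) ≤ 2⁻¹ := by
    refine le_trans (Summable.sum_le_tsum F (fun j _ => by positivity) hgeo) ?_
    have h1 : ∑' j : ℕ, ((1:ℝ)/2) ^ (j + 2) = (∑' j : ℕ, ((1:ℝ)/2) ^ j) * ((1:ℝ)/2) ^ 2 := by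
      rw [← tsum_mul_right]
      exact tsum_congr fun j => by rw [pow_add]
    rw [h1, tsum_geometric_of_lt_one (by norm_num) (by norm_num)]
    norm_num
  rw [step1]
  refine le_trans (Finset.abs_sum_le_sum_abs _ _) ?_
  refine le_trans (Finset.sum_le_sum (fun j _ => hpoint j)) ?_
  rw [Finset.sum_add_distrib, Finset.sum_add_distrib]
  have e1 := hsum_gen r⁻¹ r (by positivity)
  have e2 := hsum_gen 1 1 (by norm_num)
  have hMr : r⁻¹ * nrad z r ≤ max b (nrad z r1) := by
    rw [inv_mul_eq_div]
    exact hM r hr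
  rw [one_mul] at e2
  linarith [hsum3]
end

section
/- Let Z be a point distribution in ℂ of finite upper density. Then there exist point distributions X ⊂ ℝ and Y ⊂ ℝ of finite upper density such that the union Z ∪ X ∪ iY (where iY = {i·y : y ∈ Y}) satisfies the Lindelöf condition: sup_{r≥1} |∑_{1<|w|≤r, w ∈ Z∪X∪iY} 1/w| < +∞. -/
open Complex Filter

section Helpers

private lemma my_le_inv {a b : ℝ} (ha : 0 < a) (hb : 0 < b) (h : a ≤ b⁻¹) : b ≤ a⁻¹ := by
  rw [← one_div] at h; rw [← one_div, le_div_iff₀ ha]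
  have := (le_div_iff₀ hb).1 h
  rwa [mul_comm] at this

private lemma my_lt_inv {a b : ℝ} (ha : 0 < a) (hb : 0 < b) (h : a < b⁻¹) : b < a⁻¹ := by
  rw [← one_div] at h; rw [← one_div, lt_div_iff₀ ha]
  have := (lt_div_iff₀ hb).1 h
  rwa [mul_comm] at this

private lemma my_two_pow_ge (j : ℕ) : (j : ℝ) + 1 ≤ 2 ^ (j + 2) := by
  have h1 := Nat.lt_two_pow_self (n := j)
  have h2 : (2:ℕ) ^ j ≤ 2 ^ (j + 2) := Nat.pow_le_pow_right (by norm_num) (by omega)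
  exact_mod_cast Nat.succ_le_of_lt (lt_of_lt_of_le h1 h2)

private lemma my_summable_ind (z : ℕ → ℂ) (hfin : LocFin z) (r : ℝ) :
    Summable (fun j => if ‖z j‖ ≤ r then (1:ℝ) else 0) := by
  classical
  apply summable_of_ne_finset_zero (s := (hfin r).toFinset)
  intro j hj
  rw [Set.Finite.mem_toFinset] at hj
  exact if_neg hj

private lemma my_nrad_nonneg (z : ℕ → ℂ) (r : ℝ) : 0 ≤ nrad z r := by
  apply tsum_nonneg
  intro j
  split <;> norm_num

private lemma my_nrad_mono (z : ℕ → ℂ) (hfin : LocFin z) {r R : ℝ} (h : r ≤ R) :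
    nrad z r ≤ nrad z R := by
  apply Summable.tsum_le_tsum _ (my_summable_ind z hfin r) (my_summable_ind z hfin R)
  intro j
  by_cases hj : ‖z j‖ ≤ r
  · rw [if_pos hj, if_pos (le_trans hj h)]
  · rw [if_neg hj]
    split <;> norm_num

private lemma my_aux_locfin (z w : ℕ → ℂ) (hfin : LocFin z)
    (hw : ∀ j (r : ℝ), ‖w j‖ ≤ r → ‖z j‖ ≤ r ∨ (j:ℝ) + 1 ≤ r) :
    LocFin w := by
  intro r
  apply Set.Finite.subset ((hfin r).union (Finset.range ⌈r⌉₊).finite_toSet)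
  intro j hj
  rcases hw j r hj with h | h
  · exact Or.inl h
  · right
    simp only [Finset.coe_range, Set.mem_Iio]
    exact Nat.lt_ceil.2 (by linarith)

private lemma my_aux_density (z w : ℕ → ℂ) (hfin : LocFin z) (hdens : FinUpperDensity z)
    (hw : ∀ j (r : ℝ), ‖w j‖ ≤ r → ‖z j‖ ≤ r ∨ (j:ℝ) + 1 ≤ r) :
    FinUpperDensity w := by
  classical
  obtain ⟨b, hb⟩ := hdens
  rw [eventually_map] at hb
  obtain ⟨R0, hR0⟩ := eventually_atTop.1 hb
  have hwfin := my_aux_locfin z w hfin hw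
  refine ⟨b + 2, ?_⟩
  rw [eventually_map]
  filter_upwards [eventually_ge_atTop (max R0 1)] with r hr
  have hr1 : (1:ℝ) ≤ r := le_trans (le_max_right _ _) hr
  have hr0 : (0:ℝ) < r := by linarith
  have key : nrad w r ≤ nrad z r + (⌈r⌉₊ : ℝ) := by
    have h1 := my_summable_ind w hwfin r
    have h2 := my_summable_ind z hfin r
    have h3 : Summable (fun j : ℕ => if j ∈ Finset.range ⌈r⌉₊ then (1:ℝ) else 0) :=
      summable_of_ne_finset_zero (s := Finset.range ⌈r⌉₊) (fun j hj => if_neg hj)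
    have h4 : nrad w r ≤ ∑' j, ((if ‖z j‖ ≤ r then (1:ℝ) else 0)
        + (if j ∈ Finset.range ⌈r⌉₊ then (1:ℝ) else 0)) := by
      apply Summable.tsum_le_tsum _ h1 (h2.add h3)
      intro j
      by_cases hj : ‖w j‖ ≤ r
      · rw [if_pos hj]
        rcases hw j r hj with h | h
        · rw [if_pos h]
          have : (0:ℝ) ≤ if j ∈ Finset.range ⌈r⌉₊ then (1:ℝ) else 0 := by split <;> norm_num
          linarith
        · have hjr : j ∈ Finset.range ⌈r⌉₊ := Finset.mem_range.2 (Nat.lt_ceil.2 (by linarith))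
          rw [if_pos hjr]
          have : (0:ℝ) ≤ if ‖z j‖ ≤ r then (1:ℝ) else 0 := by split <;> norm_num
          linarith
      · rw [if_neg hj]
        have h5 : (0:ℝ) ≤ if ‖z j‖ ≤ r then (1:ℝ) else 0 := by split <;> norm_num
        have h6 : (0:ℝ) ≤ if j ∈ Finset.range ⌈r⌉₊ then (1:ℝ) else 0 := by split <;> norm_num
        linarith
    have h7 : ∑' j, ((if ‖z j‖ ≤ r then (1:ℝ) else 0)
        + (if j ∈ Finset.range ⌈r⌉₊ then (1:ℝ) else 0)) = nrad z r + (⌈r⌉₊ : ℝ) := by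
      rw [Summable.tsum_add h2 h3]
      congr 1
      rw [tsum_eq_sum (s := Finset.range ⌈r⌉₊) (fun j hj => if_neg hj)]
      rw [Finset.sum_congr rfl (fun j hj => if_pos hj), Finset.sum_const, Finset.card_range]
      simp
    rw [h7] at h4
    exact h4
  have hc : (⌈r⌉₊ : ℝ) ≤ r + 1 := (Nat.ceil_lt_add_one hr0.le).le
  have hzr : nrad z r / r ≤ b := hR0 r (le_trans (le_max_left _ _) hr)
  have h8 : nrad w r / r ≤ (nrad z r + (⌈r⌉₊:ℝ)) / r := by gcongr
  rw [add_div] at h8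
  have h9 : (⌈r⌉₊ : ℝ) / r ≤ 2 := by
    rw [div_le_iff₀ hr0]; linarith
  linarith

private lemma my_I_inv_re (c : ℝ) : ((Complex.I * (c:ℂ))⁻¹).re = 0 := by
  simp [mul_inv, Complex.inv_I, Complex.mul_re]

private lemma my_I_inv_im (c : ℝ) : ((Complex.I * (c:ℂ))⁻¹).im = -c⁻¹ := by
  simp [mul_inv, Complex.inv_I, Complex.mul_im]

end Helpers

theorem exists_real_distributions_lindelof_union (z : ℕ → ℂ) (hfin : LocFin z)
    (hdens : FinUpperDensity z) :
    ∃ x y : ℕ → ℝ,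
      LocFin (fun j => (x j : ℂ)) ∧ LocFin (fun j => Complex.I * (y j : ℂ)) ∧
      FinUpperDensity (fun j => (x j : ℂ)) ∧
      FinUpperDensity (fun j => Complex.I * (y j : ℂ)) ∧
      LindCond (Sum.elim (Sum.elim z (fun j => (x j : ℂ)))
        (fun j => Complex.I * (y j : ℂ))) := by
  classical
  obtain ⟨b, hb⟩ := hdens
  rw [eventually_map] at hb
  obtain ⟨R0, hR0⟩ := eventually_atTop.1 hb
  set x : ℕ → ℝ := fun j =>
    if 1 < ‖z j‖ ∧ ((z j)⁻¹).re ≠ 0 then (-((z j)⁻¹).re)⁻¹ else 2 ^ (j + 2)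
    with hxdef
  set y : ℕ → ℝ := fun j =>
    if 1 < ‖z j‖ ∧ ((z j)⁻¹).im ≠ 0 then (((z j)⁻¹).im)⁻¹ else 2 ^ (j + 2)
    with hydef
  have hxabs : ∀ j, ‖(x j : ℂ)‖ = |x j| := fun j => by rw [Complex.norm_real, Real.norm_eq_abs]
  have hyabs : ∀ j, ‖Complex.I * (y j : ℂ)‖ = |y j| := by
    intro j; rw [norm_mul, Complex.norm_I, one_mul, Complex.norm_real, Real.norm_eq_abs]
  -- basic genuine-case facts
  have hresmall : ∀ j, 1 < ‖z j‖ →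
      |((z j)⁻¹).re| ≤ (‖z j‖)⁻¹ := by
    intro j _
    rw [← norm_inv]
    exact Complex.abs_re_le_norm _
  have himsmall : ∀ j, 1 < ‖z j‖ →
      |((z j)⁻¹).im| ≤ (‖z j‖)⁻¹ := by
    intro j _
    rw [← norm_inv]
    exact Complex.abs_im_le_norm _
  have hxgen : ∀ j, (1 < ‖z j‖ ∧ ((z j)⁻¹).re ≠ 0) →
      |x j| = |((z j)⁻¹).re|⁻¹ ∧ ‖z j‖ ≤ |x j| := by
    intro j hg
    have hx : x j = (-((z j)⁻¹).re)⁻¹ := by rw [hxdef]; simp only [if_pos hg]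
    have hspos : 0 < |((z j)⁻¹).re| := abs_pos.2 hg.2
    have h1 := hresmall j hg.1
    have hza : (0:ℝ) < ‖z j‖ := lt_trans one_pos hg.1
    have he : |x j| = |((z j)⁻¹).re|⁻¹ := by rw [hx, abs_inv, abs_neg]
    refine ⟨he, ?_⟩
    rw [he]
    exact my_le_inv hspos hza h1
  have hygen : ∀ j, (1 < ‖z j‖ ∧ ((z j)⁻¹).im ≠ 0) →
      |y j| = |((z j)⁻¹).im|⁻¹ ∧ ‖z j‖ ≤ |y j| := by
    intro j hg
    have hy : y j = (((z j)⁻¹).im)⁻¹ := by rw [hydef]; simp only [if_pos hg]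
    have hspos : 0 < |((z j)⁻¹).im| := abs_pos.2 hg.2
    have h1 := himsmall j hg.1
    have hza : (0:ℝ) < ‖z j‖ := lt_trans one_pos hg.1
    have he : |y j| = |((z j)⁻¹).im|⁻¹ := by rw [hy, abs_inv]
    refine ⟨he, ?_⟩
    rw [he]
    exact my_le_inv hspos hza h1
  have hxge : ∀ j (r : ℝ), |x j| ≤ r → ‖z j‖ ≤ r ∨ (j:ℝ) + 1 ≤ r := by
    intro j r h
    by_cases hg : 1 < ‖z j‖ ∧ ((z j)⁻¹).re ≠ 0
    · exact Or.inl (le_trans (hxgen j hg).2 h)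
    · right
      have hx : x j = 2 ^ (j + 2) := by rw [hxdef]; simp only [if_neg hg]
      have h2 := my_two_pow_ge j
      have h3 : |x j| = x j := abs_of_pos (by rw [hx]; positivity)
      rw [h3, hx] at h
      linarith
  have hyge : ∀ j (r : ℝ), |y j| ≤ r → ‖z j‖ ≤ r ∨ (j:ℝ) + 1 ≤ r := by
    intro j r h
    by_cases hg : 1 < ‖z j‖ ∧ ((z j)⁻¹).im ≠ 0
    · exact Or.inl (le_trans (hygen j hg).2 h)
    · right
      have hy : y j = 2 ^ (j + 2) := by rw [hydef]; simp only [if_neg hg]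
      have h2 := my_two_pow_ge j
      have h3 : |y j| = y j := abs_of_pos (by rw [hy]; positivity)
      rw [h3, hy] at h
      linarith
  have hxw : ∀ j (r : ℝ), ‖(x j : ℂ)‖ ≤ r →
      ‖z j‖ ≤ r ∨ (j:ℝ) + 1 ≤ r := by
    intro j r h; rw [hxabs] at h; exact hxge j r h
  have hyw : ∀ j (r : ℝ), ‖Complex.I * (y j : ℂ)‖ ≤ r →
      ‖z j‖ ≤ r ∨ (j:ℝ) + 1 ≤ r := by
    intro j r h; rw [hyabs] at h; exact hyge j r h
  have hlocx : LocFin (fun j => ((x j : ℂ))) := my_aux_locfin z _ hfin hxw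
  have hlocy : LocFin (fun j => Complex.I * ((y j : ℂ))) := my_aux_locfin z _ hfin hyw
  have hdenx : FinUpperDensity (fun j => ((x j : ℂ))) := my_aux_density z _ hfin ⟨b, by rwa [eventually_map]⟩ hxw
  have hdeny : FinUpperDensity (fun j => Complex.I * ((y j : ℂ))) := my_aux_density z _ hfin ⟨b, by rwa [eventually_map]⟩ hyw
  -- uniform bound on nrad z r / r for r ≥ 1
  set R1 : ℝ := max R0 1 with hR1def
  set B : ℝ := max b (nrad z R1) with hBdef
  have hnb : ∀ r : ℝ, 1 ≤ r → nrad z r / r ≤ B := by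
    intro r hr
    rcases le_total R1 r with h | h
    · exact le_trans (hR0 r (le_trans (le_max_left _ _) h)) (le_max_left _ _)
    · have h1 : nrad z r ≤ nrad z R1 := my_nrad_mono z hfin h
      have h2 : nrad z r / r ≤ nrad z r := div_le_self (my_nrad_nonneg z r) hr
      exact le_trans (le_trans h2 h1) (le_max_right _ _)
  refine ⟨x, y, hlocx, hlocy, hdenx, hdeny, ⟨2 * B + 2, ?_⟩⟩
  intro r hr
  have hr0 : (0:ℝ) < r := lt_of_lt_of_le one_pos hr
  set F : ℕ → ℂ := fun j =>
    if 1 < ‖z j‖ ∧ ‖z j‖ ≤ r then (z j)⁻¹ else 0 with hFdef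
  set G : ℕ → ℂ := fun j =>
    if 1 < ‖(x j : ℂ)‖ ∧ ‖(x j : ℂ)‖ ≤ r then ((x j : ℂ))⁻¹ else 0
    with hGdef
  set H : ℕ → ℂ := fun j =>
    if 1 < ‖Complex.I * (y j : ℂ)‖ ∧ ‖Complex.I * (y j : ℂ)‖ ≤ r
    then (Complex.I * (y j : ℂ))⁻¹ else 0 with hHdef
  set T : Finset ℕ := (hfin r).toFinset ∪ Finset.range ⌈r⌉₊ with hTdef
  have hTz : ∀ j ∉ T, r < ‖z j‖ ∧ r < (j:ℝ) + 1 := by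
    intro j hj
    rw [hTdef, Finset.mem_union, Set.Finite.mem_toFinset, Finset.mem_range] at hj
    push_neg at hj
    constructor
    · exact lt_of_not_ge (fun h => hj.1 h)
    · have h2 : r ≤ (j:ℝ) := (Nat.ceil_le).1 hj.2
      linarith
  have hF0 : ∀ j ∉ T, F j = 0 := by
    intro j hj
    exact if_neg (fun h => absurd h.2 (not_le.2 (hTz j hj).1))
  have hG0 : ∀ j ∉ T, G j = 0 := by
    intro j hj
    obtain ⟨h1, h2⟩ := hTz j hj
    refine if_neg (fun h => ?_)
    rw [hxabs] at h
    rcases hxge j r h.2 with h3 | h3 <;> linarith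
  have hH0 : ∀ j ∉ T, H j = 0 := by
    intro j hj
    obtain ⟨h1, h2⟩ := hTz j hj
    refine if_neg (fun h => ?_)
    rw [hyabs] at h
    rcases hyge j r h.2 with h3 | h3 <;> linarith
  have hsplit : cSum (Sum.elim (Sum.elim z (fun j => ((x j : ℂ))))
      (fun j => Complex.I * (y j : ℂ))) r = ∑ j ∈ T, (F j + G j + H j) := by
    rw [cSum, tsum_eq_sum (s := (T.disjSum T).disjSum T) ?_]
    · rw [Finset.sum_disjSum, Finset.sum_disjSum]
      simp only [Sum.elim_inl, Sum.elim_inr]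
      rw [Finset.sum_add_distrib, Finset.sum_add_distrib]
      rfl
    · rintro ((j | j) | j) hi
      · rw [Finset.inl_mem_disjSum, Finset.inl_mem_disjSum] at hi
        simp only [Sum.elim_inl]
        exact hF0 j hi
      · rw [Finset.inl_mem_disjSum, Finset.inr_mem_disjSum] at hi
        simp only [Sum.elim_inl, Sum.elim_inr]
        exact hG0 j hi
      · rw [Finset.inr_mem_disjSum] at hi
        simp only [Sum.elim_inr]
        exact hH0 j hi
  rw [hsplit]
  have hGim : ∀ j, (G j).im = 0 := by
    intro j
    simp only [hGdef]
    split
    · rw [← Complex.ofReal_inv]; exact Complex.ofReal_im _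
    · rfl
  have hHre : ∀ j, (H j).re = 0 := by
    intro j
    simp only [hHdef]
    split
    · exact my_I_inv_re _
    · rfl
  have hre : ∀ j, |(F j).re + (G j).re| ≤
      (if ‖z j‖ ≤ r then 1/r else 0) + ((2:ℝ)^(j+2))⁻¹ := by
    intro j
    have hp2 : (0:ℝ) < ((2:ℝ)^(j+2))⁻¹ := by positivity
    have hind : (0:ℝ) ≤ (if ‖z j‖ ≤ r then 1/r else 0) := by
      split
      · positivity
      · exact le_refl _
    by_cases hg : 1 < ‖z j‖ ∧ ((z j)⁻¹).re ≠ 0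
    · obtain ⟨hxeq, hxgez⟩ := hxgen j hg
      have hspos : 0 < |((z j)⁻¹).re| := abs_pos.2 hg.2
      have hx1 : 1 < |x j| := lt_of_lt_of_le hg.1 hxgez
      have hxv : x j = (-((z j)⁻¹).re)⁻¹ := by rw [hxdef]; simp only [if_pos hg]
      by_cases hzr : ‖z j‖ ≤ r
      · have hFj : F j = (z j)⁻¹ := by simp only [hFdef]; rw [if_pos ⟨hg.1, hzr⟩]
        by_cases hxr : |x j| ≤ r
        · have hc : 1 < ‖(x j : ℂ)‖ ∧ ‖(x j : ℂ)‖ ≤ r := by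
            rw [hxabs]; exact ⟨hx1, hxr⟩
          have hGj : G j = ((x j : ℂ))⁻¹ := by simp only [hGdef]; rw [if_pos hc]
          have hGre : (G j).re = -((z j)⁻¹).re := by
            rw [hGj, ← Complex.ofReal_inv, Complex.ofReal_re, hxv, inv_inv]
          rw [hFj, hGre]
          simp only [add_neg_cancel , abs_zero]
          linarith
        · have hGj : G j = 0 := by
            simp only [hGdef]
            rw [if_neg]
            rw [hxabs]
            exact fun h => hxr h.2
          have h5 : r < |x j| := lt_of_not_ge hxr
          have h6 : |((z j)⁻¹).re| < r⁻¹ :=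
            my_lt_inv hr0 hspos (by rw [← hxeq]; exact h5)
          rw [hFj, hGj]
          simp only [Complex.zero_re, add_zero]
          rw [if_pos hzr, one_div]
          linarith
      · have hFj : F j = 0 := by simp only [hFdef]; exact if_neg (fun h => hzr h.2)
        have hGj : G j = 0 := by
          simp only [hGdef]
          rw [if_neg]
          rw [hxabs]
          exact fun h => hzr (le_trans hxgez h.2)
        rw [hFj, hGj]
        simp only [Complex.zero_re, add_zero, abs_zero]
        linarith
    · have hxv : x j = 2^(j+2) := by rw [hxdef]; simp only [if_neg hg]
      have hFre : (F j).re = 0 := by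
        simp only [hFdef]
        split_ifs with h
        · by_cases hone : ((z j)⁻¹).re = 0
          · exact hone
          · exact absurd ⟨h.1, hone⟩ hg
        · rfl
      have hGb : |(G j).re| ≤ ((2:ℝ)^(j+2))⁻¹ := by
        simp only [hGdef]
        split_ifs with h
        · rw [← Complex.ofReal_inv, Complex.ofReal_re, hxv, abs_inv,
            abs_of_pos (by positivity : (0:ℝ) < 2^(j+2))]
        · simp only [Complex.zero_re, abs_zero]
          positivity
      rw [hFre, zero_add]
      linarith
  have him : ∀ j, |(F j).im + (H j).im| ≤
      (if ‖z j‖ ≤ r then 1/r else 0) + ((2:ℝ)^(j+2))⁻¹ := by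
    intro j
    have hp2 : (0:ℝ) < ((2:ℝ)^(j+2))⁻¹ := by positivity
    have hind : (0:ℝ) ≤ (if ‖z j‖ ≤ r then 1/r else 0) := by
      split
      · positivity
      · exact le_refl _
    by_cases hg : 1 < ‖z j‖ ∧ ((z j)⁻¹).im ≠ 0
    · obtain ⟨hyeq, hygez⟩ := hygen j hg
      have hspos : 0 < |((z j)⁻¹).im| := abs_pos.2 hg.2
      have hy1 : 1 < |y j| := lt_of_lt_of_le hg.1 hygez
      have hyv : y j = (((z j)⁻¹).im)⁻¹ := by rw [hydef]; simp only [if_pos hg]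
      by_cases hzr : ‖z j‖ ≤ r
      · have hFj : F j = (z j)⁻¹ := by simp only [hFdef]; rw [if_pos ⟨hg.1, hzr⟩]
        by_cases hyr : |y j| ≤ r
        · have hc : 1 < ‖Complex.I * (y j : ℂ)‖ ∧
              ‖Complex.I * (y j : ℂ)‖ ≤ r := by
            rw [hyabs]; exact ⟨hy1, hyr⟩
          have hHj : H j = (Complex.I * (y j : ℂ))⁻¹ := by
            simp only [hHdef]; rw [if_pos hc]
          have hHim : (H j).im = -((z j)⁻¹).im := by
            rw [hHj, my_I_inv_im, hyv, inv_inv]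
          rw [hFj, hHim]
          simp only [add_neg_cancel, abs_zero]
          linarith
        · have hHj : H j = 0 := by
            simp only [hHdef]
            rw [if_neg]
            rw [hyabs]
            exact fun h => hyr h.2
          have h5 : r < |y j| := lt_of_not_ge hyr
          have h6 : |((z j)⁻¹).im| < r⁻¹ :=
            my_lt_inv hr0 hspos (by rw [← hyeq]; exact h5)
          rw [hFj, hHj]
          simp only [Complex.zero_im, add_zero]
          rw [if_pos hzr, one_div]
          linarith
      · have hFj : F j = 0 := by simp only [hFdef]; exact if_neg (fun h => hzr h.2)
        have hHj : H j = 0 := by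
          simp only [hHdef]
          rw [if_neg]
          rw [hyabs]
          exact fun h => hzr (le_trans hygez h.2)
        rw [hFj, hHj]
        simp only [Complex.zero_im, add_zero, abs_zero]
        linarith
    · have hyv : y j = 2^(j+2) := by rw [hydef]; simp only [if_neg hg]
      have hFim : (F j).im = 0 := by
        simp only [hFdef]
        split_ifs with h
        · by_cases hone : ((z j)⁻¹).im = 0
          · exact hone
          · exact absurd ⟨h.1, hone⟩ hg
        · rfl
      have hHb : |(H j).im| ≤ ((2:ℝ)^(j+2))⁻¹ := by
        simp only [hHdef]
        split_ifs with h
        · rw [my_I_inv_im, abs_neg, hyv, abs_inv,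
            abs_of_pos (by positivity : (0:ℝ) < 2^(j+2))]
        · simp only [Complex.zero_im, abs_zero]
          positivity
      rw [hFim, zero_add]
      linarith
  have key : ∀ j, ‖F j + G j + H j‖ ≤
      (if ‖z j‖ ≤ r then 2/r else 0) + ((2:ℝ)^(j+1))⁻¹ := by
    intro j
    have h1 := Complex.norm_le_abs_re_add_abs_im (F j + G j + H j)
    have hre' : (F j + G j + H j).re = (F j).re + (G j).re := by
      simp [Complex.add_re, hHre j]
    have him' : (F j + G j + H j).im = (F j).im + (H j).im := by
      simp [Complex.add_im, hGim j]
    rw [hre', him'] at h1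
    have h2 := hre j
    have h3 := him j
    have h4 : ((2:ℝ)^(j+2))⁻¹ + ((2:ℝ)^(j+2))⁻¹ = ((2:ℝ)^(j+1))⁻¹ := by
      rw [pow_succ, mul_inv]
      ring
    have h5 : (if ‖z j‖ ≤ r then 1/r else 0)
        + (if ‖z j‖ ≤ r then 1/r else 0)
        = (if ‖z j‖ ≤ r then 2/r else 0) := by
      split <;> ring
    linarith
  have habs : ‖∑ j ∈ T, (F j + G j + H j)‖ ≤
      ∑ j ∈ T, ‖F j + G j + H j‖ := by
    have := norm_sum_le T (fun j => F j + G j + H j)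
    simpa only using this
  have hsum2 : ∑ j ∈ T, ‖F j + G j + H j‖ ≤
      ∑ j ∈ T, ((if ‖z j‖ ≤ r then 2/r else 0) + ((2:ℝ)^(j+1))⁻¹) :=
    Finset.sum_le_sum (fun j _ => key j)
  rw [Finset.sum_add_distrib] at hsum2
  have hA : ∑ j ∈ T, (if ‖z j‖ ≤ r then 2/r else 0) = 2/r * nrad z r := by
    have h1 : nrad z r = ∑ j ∈ T, (if ‖z j‖ ≤ r then (1:ℝ) else 0) := by
      rw [nrad]
      apply tsum_eq_sum
      intro j hj
      exact if_neg (not_le.2 (hTz j hj).1)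
    rw [h1, Finset.mul_sum]
    apply Finset.sum_congr rfl
    intro j _
    split <;> simp
  have hB : ∑ j ∈ T, ((2:ℝ)^(j+1))⁻¹ ≤ 2 := by
    have hs : Summable (fun j : ℕ => ((2:ℝ)^(j+1))⁻¹) := by
      simp_rw [pow_succ, mul_inv, ← inv_pow]
      exact (summable_geometric_of_lt_one (by norm_num) (by norm_num)).mul_right _
    have h1 : ∑ j ∈ T, ((2:ℝ)^(j+1))⁻¹ ≤ ∑' j : ℕ, ((2:ℝ)^(j+1))⁻¹ :=
      Summable.sum_le_tsum T (fun j _ => by positivity) hs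
    have h2 : ∑' j : ℕ, ((2:ℝ)^(j+1))⁻¹ = 1 := by
      simp_rw [pow_succ, mul_inv, ← inv_pow]
      rw [tsum_mul_right, tsum_geometric_inv_two]
      norm_num
    linarith
  have hC : 2/r * nrad z r ≤ 2 * B := by
    have h1 : 2/r * nrad z r = 2 * (nrad z r / r) := by ring
    rw [h1]
    have := hnb r hr
    linarith
  rw [hA] at hsum2
  linarith
end
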